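/- Let A ∈ ℝ^{r×r} have singular value decomposition A = P D Q^T with P, Q orthogonal and D diagonal with nonnegative diagonal entries. Then for every orthogonal R ∈ ℝ^{r×r}, Trace(R A) ≤ Trace(D), with equality when R = Q P^T. -/
import Mathlib

open Matrix

lemma entry_le_one {r : ℕ} (M : Matrix (Fin r) (Fin r) ℝ) (h : Mᵀ * M = 1)
    (i j : Fin r) : M i j ≤ 1 := by
  have h1 : (Mᵀ * M) j j = 1 := by rw [h]; simp
  have h2 : ∑ k, M k j ^ 2 = 1 := by
    rw [← h1]; simp [Matrix.mul_apply, Matrix.transpose_apply, sq]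
  have h3 : M i j ^ 2 ≤ 1 := by
    rw [← h2]
    exact Finset.single_le_sum (f := fun k => M k j ^ 2) (fun k _ => sq_nonneg _) (Finset.mem_univ i)
  nlinarith [sq_nonneg (M i j - 1)]

theorem stmt_13 {r : ℕ} (A P Q : Matrix (Fin r) (Fin r) ℝ) (d : Fin r → ℝ)
    (hP : Pᵀ * P = 1) (hP' : P * Pᵀ = 1) (hQ : Qᵀ * Q = 1) (hQ' : Q * Qᵀ = 1)
    (hd : ∀ i, 0 ≤ d i) (hA : A = P * Matrix.diagonal d * Qᵀ) :
    (∀ R : Matrix (Fin r) (Fin r) ℝ, Rᵀ * R = 1 →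
      Matrix.trace (R * A) ≤ Matrix.trace (Matrix.diagonal d)) ∧
    Matrix.trace ((Q * Pᵀ) * A) = Matrix.trace (Matrix.diagonal d) := by
  constructor
  · intro R hR
    have key : Matrix.trace (R * A) = Matrix.trace ((Qᵀ * R * P) * Matrix.diagonal d) := by
      rw [hA]
      rw [show R * (P * Matrix.diagonal d * Qᵀ) = (R * P * Matrix.diagonal d) * Qᵀ by
        noncomm_ring]
      rw [Matrix.trace_mul_comm]
      noncomm_ring
    rw [key]
    set M := Qᵀ * R * P with hM
    have hMo : Mᵀ * M = 1 := by
      simp only [hM, Matrix.transpose_mul, Matrix.transpose_transpose]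
      calc Pᵀ * (Rᵀ * Q) * (Qᵀ * R * P)
          = Pᵀ * (Rᵀ * (Q * Qᵀ) * R) * P := by noncomm_ring
        _ = 1 := by rw [hQ', Matrix.mul_one, hR, Matrix.mul_one, hP]
    have h1 : Matrix.trace (M * Matrix.diagonal d) = ∑ i, M i i * d i := by
      simp [Matrix.trace, Matrix.diag, Matrix.mul_diagonal]
    have h2 : Matrix.trace (Matrix.diagonal d) = ∑ i, d i := by
      simp [Matrix.trace]
    rw [h1, h2]
    apply Finset.sum_le_sum
    intro i _
    have := entry_le_one M hMo i i
    nlinarith [hd i]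
  · rw [hA]
    have : Q * Pᵀ * (P * Matrix.diagonal d * Qᵀ) = Q * Matrix.diagonal d * Qᵀ := by
      calc Q * Pᵀ * (P * Matrix.diagonal d * Qᵀ)
          = Q * (Pᵀ * P) * Matrix.diagonal d * Qᵀ := by noncomm_ring
        _ = Q * Matrix.diagonal d * Qᵀ := by rw [hP, Matrix.mul_one]
    rw [this, Matrix.trace_mul_comm, ← Matrix.mul_assoc, hQ, Matrix.one_mul]
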